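/- For the componentwise order on ℝ^d (deterministic rectangularity): let Θ be finite and for each θ let p^θ and q^θ_u (indexed by states u in a finite set U) be probability vectors, with the family closed under all combinations (for every θ, θ', θ'' there is θ̄ with first-stage law of θ, second-stage laws of θ', θ''). Then for any function X : paths → ℝ^d, max_θ Σ_u p^θ_u Σ_v q^θ_{v|u} X(u,v) computed directly equals the nested value max over first-stage laws of the expectation of the componentwise max over second-stage laws, i.e., sup_θ E^θ[X] = sup_θ E^θ[ sup_{θ'} E^{θ'}_{second stage}[X] ] componentwise. -/
import Mathlib


/-- Deterministic rectangularity for the componentwise order on a two-period finite tree: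
for a rectangular family of two-stage models, the direct worst-case expectation equals the
nested worst-case expectation, componentwise. -/
theorem stmt_19 {d : ℕ} {Θ U W : Type*} [Fintype Θ] [Nonempty Θ]
    [Fintype U] [Nonempty U] [Fintype W] [Nonempty W]
    (p : Θ → U → ℝ) (q : Θ → U → W → ℝ)
    (hp0 : ∀ θ u, 0 ≤ p θ u) (hp1 : ∀ θ, ∑ u, p θ u = 1)
    (hq0 : ∀ θ u w, 0 ≤ q θ u w) (hq1 : ∀ θ u, ∑ w, q θ u w = 1)
    (hrect : ∀ (θ : Θ) (σ : U → Θ), ∃ θbar : Θ,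
      p θbar = p θ ∧ ∀ u, q θbar u = q (σ u) u)
    (X : U → W → (Fin d → ℝ)) (i : Fin d) :
    Finset.univ.sup' Finset.univ_nonempty
        (fun θ => ∑ u, p θ u * ∑ w, q θ u w * X u w i) =
      Finset.univ.sup' Finset.univ_nonempty
        (fun θ => ∑ u, p θ u *
          Finset.univ.sup' Finset.univ_nonempty
            (fun θ' => ∑ w, q θ' u w * X u w i)) := by
  apply le_antisymm
  · apply Finset.sup'_le
    intro θ _
    apply Finset.le_sup'_of_le _ (Finset.mem_univ θ)
    apply Finset.sum_le_sum
    intro u _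
    exact mul_le_mul_of_nonneg_left
      (Finset.le_sup' (fun θ' => ∑ w, q θ' u w * X u w i) (Finset.mem_univ θ))
      (hp0 θ u)
  · apply Finset.sup'_le
    intro θ _
    -- choose argmax for each u
    have hch : ∀ u : U, ∃ θ' : Θ,
        (Finset.univ.sup' Finset.univ_nonempty
          (fun θ' => ∑ w, q θ' u w * X u w i)) = ∑ w, q θ' u w * X u w i := by
      intro u
      obtain ⟨θ', _, h⟩ := Finset.exists_mem_eq_sup' (Finset.univ_nonempty)
        (fun θ' => ∑ w, q θ' u w * X u w i)
      exact ⟨θ', h⟩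
    choose σ hσ using hch
    obtain ⟨θbar, hpb, hqb⟩ := hrect θ σ
    apply Finset.le_sup'_of_le _ (Finset.mem_univ θbar)
    apply le_of_eq
    rw [hpb] at *
    apply Finset.sum_congr rfl
    intro u _
    rw [hσ u, hqb u, hpb]
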